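/- Equivalence of the dual uncertainty quantification problem and the ambiguous primal worst problem: under assumptions (G), (C), (H) and (S), the infima of (D-UQ) and (AP-W) coincide, and (D-UQ) is solvable if and only if (AP-W) is solvable. -/

import Mathlib

noncomputable section
open scoped BigOperators Classical ENNReal
open MeasureTheory

/-- Dot product on `ℝ^n`. -/
def dotp {n : ℕ} (x y : Fin n → ℝ) : ℝ := ∑ i, x i * y i

/-- The (effective) domain of an extended-real-valued function. -/
def edom {n : ℕ} (f : (Fin n → ℝ) → EReal) : Set (Fin n → ℝ) := {x | f x < ⊤}

/-- `f` is proper: it never takes the value `−∞` and is `< +∞` somewhere. -/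
def ProperFn {n : ℕ} (f : (Fin n → ℝ) → EReal) : Prop := (∀ x, f x ≠ ⊥) ∧ (∃ x, f x ≠ ⊤)

/-- `f` is closed: lower semicontinuous, and either nowhere `−∞` or identically `−∞`. -/
def ClosedFn {n : ℕ} (f : (Fin n → ℝ) → EReal) : Prop :=
  LowerSemicontinuous f ∧ ((∀ x, f x ≠ ⊥) ∨ (∀ x, f x = ⊥))

/-- Convexity of an extended-real-valued function, via convexity of its epigraph. -/
def ConvexFn {n : ℕ} (f : (Fin n → ℝ) → EReal) : Prop :=
  Convex ℝ {p : (Fin n → ℝ) × ℝ | f p.1 ≤ (p.2 : EReal)}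

/-- The conjugate `f*(w) = sup_x { wᵀx − f(x) }`. -/
def conjFn {n : ℕ} (f : (Fin n → ℝ) → EReal) (w : Fin n → ℝ) : EReal :=
  ⨆ x : Fin n → ℝ, (((dotp w x : ℝ) : EReal) - f x)

/-- The support function `δ*_X(w) = sup_{x ∈ X} xᵀw`. -/
def suppFn {n : ℕ} (X : Set (Fin n → ℝ)) (w : Fin n → ℝ) : EReal :=
  ⨆ x ∈ X, ((dotp x w : ℝ) : EReal)

/-- The convex perspective `t f(x/t)` of a proper closed convex function `f`,
equal to `t f(x/t)` for `t > 0` and to `δ*_{dom f*}(x)` for `t = 0`. -/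
def persp {n : ℕ} (f : (Fin n → ℝ) → EReal) (x : Fin n → ℝ) (t : ℝ) : EReal :=
  if 0 < t then (t : EReal) * f (t⁻¹ • x) else suppFn (edom (conjFn f)) x

/-- The concave perspective `t g(x/t)` of a function `g` with `−g` proper, closed and
convex, equal to `t g(x/t)` for `t > 0` and to `−δ*_{dom (−g)*}(x)` for `t = 0`. -/
def cpersp {n : ℕ} (g : (Fin n → ℝ) → EReal) (x : Fin n → ℝ) (t : ℝ) : EReal :=
  if 0 < t then (t : EReal) * g (t⁻¹ • x)
  else - suppFn (edom (conjFn (fun z => - g z))) x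

/-- `f` is an affine ("linear") constraint function. -/
def IsAffineFn {n : ℕ} (f : (Fin n → ℝ) → EReal) : Prop :=
  ∃ (a : Fin n → ℝ) (b : ℝ), ∀ x, f x = ((dotp a x + b : ℝ) : EReal)

/-- Positive part of an extended real number, as an extended non-negative real. -/
def epos (x : EReal) : ℝ≥0∞ := if x = ⊤ then ⊤ else ENNReal.ofReal x.toReal

/-- Expectation `E_P[f(z̃)]` with the convention that it equals `−∞` whenever the
expectations of the positive and negative parts of `f(z̃)` are both infinite
(infeasibility dominates in maximization). -/
def lowExp {n : ℕ} (P : Measure (Fin n → ℝ)) (f : (Fin n → ℝ) → EReal) : EReal :=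
  ((∫⁻ z, epos (f z) ∂P : ℝ≥0∞) : EReal) - ((∫⁻ z, epos (-(f z)) ∂P : ℝ≥0∞) : EReal)

/-- Expectation `E_P[f(z̃)]` with the convention that it equals `+∞` whenever the
expectations of the positive and negative parts of `f(z̃)` are both infinite
(infeasibility dominates in the moment constraints). -/
def highExp {n : ℕ} (P : Measure (Fin n → ℝ)) (f : (Fin n → ℝ) → EReal) : EReal :=
  - lowExp P (fun z => - f z)

variable {dz I J L : ℕ}

/-- Assumption (G): `−g_i` is proper, closed and convex for each `i`. -/
def AssumptionG (gi : Fin I → (Fin dz → ℝ) → EReal) : Prop :=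
  ∀ i, ProperFn (fun z => - gi i z) ∧ ClosedFn (fun z => - gi i z) ∧
    ConvexFn (fun z => - gi i z)

/-- Assumption (C): each `c_ℓ` is proper, closed and convex. -/
def AssumptionC (c : Fin L → (Fin dz → ℝ) → EReal) : Prop :=
  ∀ ℓ, ProperFn (c ℓ) ∧ ClosedFn (c ℓ) ∧ ConvexFn (c ℓ)

/-- Assumption (H): each `h_j` is proper, closed and convex. -/
def AssumptionH (h : Fin J → (Fin dz → ℝ) → EReal) : Prop :=
  ∀ j, ProperFn (h j) ∧ ClosedFn (h j) ∧ ConvexFn (h j)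

/-- The support set `S = {z : c_ℓ(z) ≤ 0 ∀ℓ}`. -/
def Sset (c : Fin L → (Fin dz → ℝ) → EReal) : Set (Fin dz → ℝ) :=
  {z | ∀ ℓ, c ℓ z ≤ 0}

/-- The set `S̄_i = {z ∈ S : z ∈ dom h_j ∀j, z ∈ dom(−g_i)}`. -/
def SbarI (gi : Fin I → (Fin dz → ℝ) → EReal) (c : Fin L → (Fin dz → ℝ) → EReal)
    (h : Fin J → (Fin dz → ℝ) → EReal) (i : Fin I) : Set (Fin dz → ℝ) :=
  {z | z ∈ Sset c ∧ (∀ j, h j z < ⊤) ∧ ⊥ < gi i z}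

/-- The effective support set `S̄ = ∪_i S̄_i`. -/
def Sbar (gi : Fin I → (Fin dz → ℝ) → EReal) (c : Fin L → (Fin dz → ℝ) → EReal)
    (h : Fin J → (Fin dz → ℝ) → EReal) : Set (Fin dz → ℝ) :=
  ⋃ i, SbarI gi c h i

/-- Assumption (S): each `S̄_i` is nonempty. -/
def AssumptionS (gi : Fin I → (Fin dz → ℝ) → EReal)
    (c : Fin L → (Fin dz → ℝ) → EReal) (h : Fin J → (Fin dz → ℝ) → EReal) : Prop :=
  ∀ i, (SbarI gi c h i).Nonempty

/-- The disutility function `g(z) = max_i g_i(z)`. -/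
def gFun (gi : Fin I → (Fin dz → ℝ) → EReal) (z : Fin dz → ℝ) : EReal :=
  ⨆ i, gi i z

/-- The ambiguity set `𝒫` of all probability distributions supported on `S`
satisfying the moment conditions `E_P[h_j(z̃)] ≤ μ_j`. -/
def ambSet (c : Fin L → (Fin dz → ℝ) → EReal) (h : Fin J → (Fin dz → ℝ) → EReal)
    (μ : Fin J → ℝ) : Set (Measure (Fin dz → ℝ)) :=
  {P | IsProbabilityMeasure P ∧ P (Sset c) = 1 ∧
       ∀ j, highExp P (h j) ≤ ((μ j : ℝ) : EReal)}

/-- Optimal value of the primal uncertainty quantification problem (P-UQ). -/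
def puqVal (gi : Fin I → (Fin dz → ℝ) → EReal) (c : Fin L → (Fin dz → ℝ) → EReal)
    (h : Fin J → (Fin dz → ℝ) → EReal) (μ : Fin J → ℝ) : EReal :=
  ⨆ P ∈ {P | P ∈ ambSet c h μ ∧ lowExp P (gFun gi) ≠ ⊥}, lowExp P (gFun gi)

/-- Feasible region of the dual uncertainty quantification problem (D-UQ). -/
def duqFeas (gi : Fin I → (Fin dz → ℝ) → EReal) (c : Fin L → (Fin dz → ℝ) → EReal)
    (h : Fin J → (Fin dz → ℝ) → EReal) : Set (ℝ × (Fin J → ℝ)) :=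
  {p | (∀ j, 0 ≤ p.2 j) ∧
       ∀ z ∈ Sbar gi c h, gFun gi z ≤ (p.1 : EReal) + ∑ j, (p.2 j : EReal) * h j z}

/-- Optimal value of the dual uncertainty quantification problem (D-UQ). -/
def duqVal (gi : Fin I → (Fin dz → ℝ) → EReal) (c : Fin L → (Fin dz → ℝ) → EReal)
    (h : Fin J → (Fin dz → ℝ) → EReal) (μ : Fin J → ℝ) : EReal :=
  ⨅ p ∈ duqFeas gi c h, ((p.1 + dotp μ p.2 : ℝ) : EReal)

/-- (D-UQ) is solvable. -/
def duqSolvable (gi : Fin I → (Fin dz → ℝ) → EReal) (c : Fin L → (Fin dz → ℝ) → EReal)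
    (h : Fin J → (Fin dz → ℝ) → EReal) (μ : Fin J → ℝ) : Prop :=
  duqFeas gi c h = ∅ ∨
    ∃ p ∈ duqFeas gi c h, ((p.1 + dotp μ p.2 : ℝ) : EReal) = duqVal gi c h μ

/-- The augmented support set
`U_i = {(z,u,t) : c_ℓ(z) ≤ 0 ∀ℓ, h(z) ≤ u, g_i(z) ≥ t}`. -/
def Uset {dz I J L : ℕ} (gi : Fin I → (Fin dz → ℝ) → EReal)
    (c : Fin L → (Fin dz → ℝ) → EReal) (h : Fin J → (Fin dz → ℝ) → EReal)
    (i : Fin I) : Set ((Fin dz → ℝ) × (Fin J → ℝ) × ℝ) :=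
  {q | (∀ ℓ, c ℓ q.1 ≤ 0) ∧ (∀ j, h j q.1 ≤ ((q.2.1 j : ℝ) : EReal)) ∧
       ((q.2.2 : ℝ) : EReal) ≤ gi i q.1}

/-- Feasible region of the ambiguous primal worst problem (AP-W): `β ≥ 0` and
`sup_{(z,u,t) ∈ U_i} { t − α − uᵀβ } ≤ 0` for every `i`. -/
def apwFeas {dz I J L : ℕ} (gi : Fin I → (Fin dz → ℝ) → EReal)
    (c : Fin L → (Fin dz → ℝ) → EReal) (h : Fin J → (Fin dz → ℝ) → EReal) :
    Set (ℝ × (Fin J → ℝ)) :=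
  {p | (∀ j, 0 ≤ p.2 j) ∧
       ∀ i, ∀ q ∈ Uset gi c h i, q.2.2 - p.1 - dotp q.2.1 p.2 ≤ 0}

/-- Optimal value of the ambiguous primal worst problem (AP-W). -/
def apwVal {dz I J L : ℕ} (gi : Fin I → (Fin dz → ℝ) → EReal)
    (c : Fin L → (Fin dz → ℝ) → EReal) (h : Fin J → (Fin dz → ℝ) → EReal)
    (μ : Fin J → ℝ) : EReal :=
  ⨅ p ∈ apwFeas gi c h, ((p.1 + dotp μ p.2 : ℝ) : EReal)

/-- (AP-W) is solvable. -/
def apwSolvable {dz I J L : ℕ} (gi : Fin I → (Fin dz → ℝ) → EReal)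
    (c : Fin L → (Fin dz → ℝ) → EReal) (h : Fin J → (Fin dz → ℝ) → EReal)
    (μ : Fin J → ℝ) : Prop :=
  apwFeas gi c h = ∅ ∨
    ∃ p ∈ apwFeas gi c h, ((p.1 + dotp μ p.2 : ℝ) : EReal) = apwVal gi c h μ

/-! Both feasible regions describe the same set of pairs `(α, β)`: each says that the affine
majorant `α + βᵀh` dominates every `g_i` on `S̄_i`. For (D-UQ), the `g_i` with `g_i(z) = −∞`
impose nothing at `z`, so the maximum `g` may be replaced by the individual `g_i`. For (AP-W), a
point `(z, u, t) ∈ U_i` lies over `z ∈ S̄_i`, and since `β ≥ 0` the constraint is tightest at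
`u = h(z)` and `t = g_i(z)`, which are finite when `−g_i` and the `h_j` are proper. -/

theorem EReal.coe_finset_sum {ι : Type*} (s : Finset ι) (f : ι → ℝ) :
    ((∑ i ∈ s, f i : ℝ) : EReal) = ∑ i ∈ s, (f i : EReal) :=
  map_sum (⟨⟨Real.toEReal, EReal.coe_zero⟩, EReal.coe_add⟩ : ℝ →+ EReal) f s

theorem coe_dotp {n : ℕ} (w β : Fin n → ℝ) :
    ((dotp w β : ℝ) : EReal) = ∑ j, (β j : EReal) * (w j : EReal) := by
  simp only [dotp, EReal.coe_finset_sum, EReal.coe_mul, mul_comm]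

theorem dotp_le_dotp_of_le {n : ℕ} {w u β : Fin n → ℝ} (hwu : w ≤ u) (hβ : 0 ≤ β) :
    dotp w β ≤ dotp u β :=
  Finset.sum_le_sum fun j _ => mul_le_mul_of_nonneg_right (hwu j) (hβ j)

theorem AssumptionG.ne_top {gi : Fin I → (Fin dz → ℝ) → EReal} (hG : AssumptionG gi)
    (i : Fin I) (z : Fin dz → ℝ) : gi i z ≠ ⊤ := fun hz =>
  (hG i).1.1 z (show -gi i z = ⊥ by rw [hz, EReal.neg_top])

theorem AssumptionH.ne_bot {h : Fin J → (Fin dz → ℝ) → EReal} (hH : AssumptionH h)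
    (j : Fin J) (z : Fin dz → ℝ) : h j z ≠ ⊥ :=
  (hH j).1.1 z

section Feasibility

variable {gi : Fin I → (Fin dz → ℝ) → EReal} {c : Fin L → (Fin dz → ℝ) → EReal}
  {h : Fin J → (Fin dz → ℝ) → EReal}

def MajorizesOnSbarI (gi : Fin I → (Fin dz → ℝ) → EReal) (c : Fin L → (Fin dz → ℝ) → EReal)
    (h : Fin J → (Fin dz → ℝ) → EReal) (p : ℝ × (Fin J → ℝ)) : Prop :=
  0 ≤ p.2 ∧ ∀ i, ∀ z ∈ SbarI gi c h i, gi i z ≤ (p.1 : EReal) + ∑ j, (p.2 j : EReal) * h j z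

theorem mem_SbarI_of_ne_bot {i : Fin I} {z : Fin dz → ℝ} (hz : z ∈ SbarI gi c h i)
    (i' : Fin I) (hi' : gi i' z ≠ ⊥) : z ∈ SbarI gi c h i' :=
  ⟨hz.1, hz.2.1, bot_lt_iff_ne_bot.2 hi'⟩

theorem mem_SbarI_of_mem_Uset {i : Fin I} {q : (Fin dz → ℝ) × (Fin J → ℝ) × ℝ}
    (hq : q ∈ Uset gi c h i) : q.1 ∈ SbarI gi c h i :=
  ⟨hq.1, fun j => (hq.2.1 j).trans_lt (EReal.coe_lt_top _),
    (EReal.bot_lt_coe _).trans_le hq.2.2⟩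

theorem mem_duqFeas_iff {p : ℝ × (Fin J → ℝ)} :
    p ∈ duqFeas gi c h ↔ MajorizesOnSbarI gi c h p := by
  refine and_congr Iff.rfl ⟨fun hp i z hz => ?_, fun hp z hz => ?_⟩
  · exact (le_iSup (fun i => gi i z) i).trans (hp z (Set.mem_iUnion.2 ⟨i, hz⟩))
  · obtain ⟨i, hzi⟩ := Set.mem_iUnion.1 hz
    refine iSup_le fun i' => ?_
    rcases eq_or_ne (gi i' z) ⊥ with hbot | hbot
    · exact hbot ▸ bot_le
    · exact hp i' z (mem_SbarI_of_ne_bot hzi i' hbot)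

theorem mem_apwFeas_iff (hg : ∀ i z, gi i z ≠ ⊤) (hh : ∀ j z, h j z ≠ ⊥)
    {p : ℝ × (Fin J → ℝ)} : p ∈ apwFeas gi c h ↔ MajorizesOnSbarI gi c h p := by
  obtain ⟨α, β⟩ := p
  have finite_of_mem {i : Fin I} {z : Fin dz → ℝ} (hz : z ∈ SbarI gi c h i) :
      gi i z = ((gi i z).toReal : EReal) ∧ ∀ j, h j z = ((h j z).toReal : EReal) :=
    ⟨(EReal.coe_toReal (hg i z) hz.2.2.ne').symm,
      fun j => (EReal.coe_toReal (hz.2.1 j).ne (hh j z)).symm⟩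
  have majorant_iff {i : Fin I} {z : Fin dz → ℝ} (hz : z ∈ SbarI gi c h i) :
      gi i z ≤ (α : EReal) + ∑ j, (β j : EReal) * h j z ↔
        (gi i z).toReal ≤ α + dotp (fun j => (h j z).toReal) β := by
    rw [← EReal.coe_le_coe_iff, EReal.coe_add, coe_dotp, ← (finite_of_mem hz).1]
    simp only [← (finite_of_mem hz).2]
  refine and_congr_right fun hβ => ⟨fun hp i z hz => ?_, fun hp i q hq => ?_⟩
  · obtain ⟨hgz, hhz⟩ := finite_of_mem hz
    have hq : (z, fun j => (h j z).toReal, (gi i z).toReal) ∈ Uset gi c h i :=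
      ⟨hz.1, fun j => (hhz j).le, hgz.ge⟩
    exact (majorant_iff hz).2 (by linarith [hp i _ hq])
  · have hz := mem_SbarI_of_mem_Uset hq
    obtain ⟨z, u, t⟩ := q
    obtain ⟨-, hhu, htg⟩ := hq
    obtain ⟨hgz, hhz⟩ := finite_of_mem hz
    have hwu : (fun j => (h j z).toReal) ≤ u := fun j =>
      EReal.coe_le_coe_iff.1 ((hhz j).symm.trans_le (hhu j))
    have htg' : t ≤ (gi i z).toReal := EReal.coe_le_coe_iff.1 (htg.trans_eq hgz)
    linarith [(majorant_iff hz).1 (hp i z hz), dotp_le_dotp_of_le hwu hβ]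

theorem duqFeas_eq_apwFeas (hg : ∀ i z, gi i z ≠ ⊤) (hh : ∀ j z, h j z ≠ ⊥) :
    duqFeas gi c h = apwFeas gi c h :=
  Set.ext fun _ => mem_duqFeas_iff.trans (mem_apwFeas_iff hg hh).symm

end Feasibility

theorem duq_eq_apw_general (dz I J L : ℕ)
    (gi : Fin I → (Fin dz → ℝ) → EReal) (c : Fin L → (Fin dz → ℝ) → EReal)
    (h : Fin J → (Fin dz → ℝ) → EReal) (μ : Fin J → ℝ)
    (hG : AssumptionG gi) (hH : AssumptionH h) :
    duqVal gi c h μ = apwVal gi c h μ ∧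
    (duqSolvable gi c h μ ↔ apwSolvable gi c h μ) := by
  have hfeas : duqFeas gi c h = apwFeas gi c h := duqFeas_eq_apwFeas hG.ne_top hH.ne_bot
  have hval : duqVal gi c h μ = apwVal gi c h μ := by rw [duqVal, apwVal, hfeas]
  refine ⟨hval, ?_⟩
  rw [duqSolvable, apwSolvable, hfeas, hval]

/-- **Equivalence of (D-UQ) and (AP-W)** (Proposition 4.1): under assumptions (G), (C),
(H) and (S), the infima of (D-UQ) and (AP-W) coincide, and (D-UQ) is solvable if and
only if (AP-W) is solvable. -/
theorem duq_eq_apw (dz I J L : ℕ)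
    (gi : Fin I → (Fin dz → ℝ) → EReal) (c : Fin L → (Fin dz → ℝ) → EReal)
    (h : Fin J → (Fin dz → ℝ) → EReal) (μ : Fin J → ℝ)
    (hG : AssumptionG gi) (hC : AssumptionC c) (hH : AssumptionH h)
    (hS : AssumptionS gi c h) (hSne : (Sset c).Nonempty) :
    duqVal gi c h μ = apwVal gi c h μ ∧
    (duqSolvable gi c h μ ↔ apwSolvable gi c h μ) :=
  duq_eq_apw_general dz I J L gi c h μ hG hH
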